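/- (PVH Criterion) In the PVH setup, if the maps κ_p^Syz: ker(δ_K|_{R_{≥p}}) → ker(δ_A|_{R_p}) are surjective for all p ≥ 2, then the associated graded algebra gr K = ⊕_{p≥0} I_K^p/I_K^{p+1} is quadratic, i.e., the canonical graded surjection A → gr K from the quadratic approximation A is an isomorphism. -/

import Mathlib

/-- The free algebra `F` on a set `X` of generators. -/
abbrev FreeAlg (X : Type*) := FreeAlgebra ℚ X

/-- The augmentation of the free algebra, sending each generator to `1`. -/
noncomputable def aug (X : Type*) : FreeAlg X →ₐ[ℚ] ℚ :=
  FreeAlgebra.lift ℚ (fun _ : X => (1 : ℚ))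

/-- The augmentation ideal `I_F` of the free algebra, as a `ℚ`-submodule. -/
noncomputable def augIdeal (X : Type*) : Submodule ℚ (FreeAlg X) :=
  LinearMap.ker (aug X).toLinearMap

/-- `I_F^p / I_F^{p+1}`, the degree-`p` graded piece `X̃^p` of the free algebra. -/
noncomputable abbrev grF (X : Type*) (p : ℕ) :=
  ↥(augIdeal X ^ p) ⧸
    Submodule.comap (augIdeal X ^ p).subtype (augIdeal X ^ (p + 1))

/-!
Both sides contain `I_F^{p+1}`, and `δK(R_{≥p}) ⊆ M ∩ I_F^p` because `M = δK(R_{≥2})` and the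
ranges of `δK` decrease. Conversely, an element `m ∈ M ∩ I_F^p` is `δK r` for some `r ∈ R_{≥2}`,
and we push `r` up the filtration one step at a time: if `m = δK r` with `r ∈ R_{≥q}` and
`m ∈ I_F^{q+1}`, then the truncation `π₁ r` is a syzygy of `A`, so by surjectivity of `κ_q^Syz`
it is `π₁ s` for some `s` with `δK s = 0`; then `r - s` lies in `ker π₁ = R_{≥q+1}` and still
evaluates to `m`.
-/

section PowAntitone

variable {S A : Type*} [CommSemiring S] [Semiring A] [Algebra S A] (I : Submodule S A)

theorem Submodule.pow_succ_le_pow_of_mul_self_le (hI : I * I ≤ I) {n : ℕ} (hn : 1 ≤ n) :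
    I ^ (n + 1) ≤ I ^ n := by
  obtain ⟨k, rfl⟩ := Nat.exists_eq_add_of_le' hn
  calc I ^ (k + 1 + 1) = I ^ k * (I * I) := by rw [pow_succ, pow_succ, mul_assoc]
    _ ≤ I ^ k * I := mul_le_mul_right hI _
    _ = I ^ (k + 1) := (pow_succ _ _).symm

theorem Submodule.pow_le_pow_of_mul_self_le (hI : I * I ≤ I) {a b : ℕ} (hb : 1 ≤ b)
    (hba : b ≤ a) : I ^ a ≤ I ^ b := by
  induction a, hba using Nat.le_induction with
  | base => exact le_rfl
  | succ a hba ih => exact (I.pow_succ_le_pow_of_mul_self_le hI (hb.trans hba)).trans ih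

end PowAntitone

theorem augIdeal_mul_self_le (X : Type*) : augIdeal X * augIdeal X ≤ augIdeal X := by
  rw [Submodule.mul_le]
  intro x hx y hy
  simp only [augIdeal, LinearMap.mem_ker, AlgHom.toLinearMap_apply] at *
  rw [map_mul, hx, hy, mul_zero]

theorem augIdeal_pow_le_pow (X : Type*) {a b : ℕ} (hb : 1 ≤ b) (hba : b ≤ a) :
    augIdeal X ^ a ≤ augIdeal X ^ b :=
  (augIdeal X).pow_le_pow_of_mul_self_le (augIdeal_mul_self_le X) hb hba

section Filtration

variable {S N : Type*} [Semiring S] [AddCommMonoid N] [Module S N]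
  {R : ℕ → Type*} [∀ p, AddCommMonoid (R p)] [∀ p, Module S (R p)]
  {ι : ∀ p, R (p + 1) →ₗ[S] R p} {δ : ∀ p, R p →ₗ[S] N}

theorem range_antitone_of_comp_eq (hcomp : ∀ p, (δ p).comp (ι p) = δ (p + 1)) {p q : ℕ}
    (hpq : p ≤ q) : LinearMap.range (δ q) ≤ LinearMap.range (δ p) := by
  induction q, hpq using Nat.le_induction with
  | base => exact le_rfl
  | succ q _ ih =>
    refine le_trans ?_ ih
    rw [← hcomp q, LinearMap.range_comp]
    exact LinearMap.map_le_range

end Filtration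

section PVH

variable {X : Type*}
  {R : ℕ → Type*} [∀ p, AddCommGroup (R p)] [∀ p, Module ℚ (R p)]
  {Rdeg : ℕ → Type*} [∀ p, AddCommGroup (Rdeg p)] [∀ p, Module ℚ (Rdeg p)]
  {ι : ∀ p, R (p + 1) →ₗ[ℚ] R p} {π₁ : ∀ p, R p →ₗ[ℚ] Rdeg p}
  {δK : ∀ p, R p →ₗ[ℚ] FreeAlg X} {hδ : ∀ p r, δK p r ∈ augIdeal X ^ p}
  {δA : ∀ p, Rdeg p →ₗ[ℚ] grF X p}

theorem exists_lift_of_mem_pow_succ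
    (hexact : ∀ p, LinearMap.ker (π₁ p) = LinearMap.range (ι p))
    (hcomp : ∀ p, (δK p).comp (ι p) = δK (p + 1))
    (hδA : ∀ p (r : R p), δA p (π₁ p r) = Submodule.Quotient.mk ⟨δK p r, hδ p r⟩)
    {q : ℕ} (hκ : ∀ y : Rdeg q, δA q y = 0 → ∃ r : R q, δK q r = 0 ∧ π₁ q r = y)
    (r : R q) (hr : δK q r ∈ augIdeal X ^ (q + 1)) :
    ∃ t : R (q + 1), δK (q + 1) t = δK q r := by
  have hsyz : δA q (π₁ q r) = 0 := by
    rw [hδA q r, Submodule.Quotient.mk_eq_zero]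
    exact hr
  obtain ⟨s, hs, hsr⟩ := hκ (π₁ q r) hsyz
  have hker : r - s ∈ LinearMap.ker (π₁ q) := by
    rw [LinearMap.mem_ker, map_sub, hsr, sub_self]
  obtain ⟨t, ht⟩ := (hexact q).le hker
  refine ⟨t, ?_⟩
  rw [← hcomp q, LinearMap.comp_apply, ht, map_sub, hs, sub_zero]

theorem mem_range_of_mem_range_two_of_mem_pow
    (hexact : ∀ p, LinearMap.ker (π₁ p) = LinearMap.range (ι p))
    (hcomp : ∀ p, (δK p).comp (ι p) = δK (p + 1))
    (hδA : ∀ p (r : R p), δA p (π₁ p r) = Submodule.Quotient.mk ⟨δK p r, hδ p r⟩)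
    (hκ : ∀ p, 2 ≤ p → ∀ y : Rdeg p, δA p y = 0 → ∃ r : R p, δK p r = 0 ∧ π₁ p r = y)
    {m : FreeAlg X} (hm2 : m ∈ LinearMap.range (δK 2)) {p : ℕ} (hp : 2 ≤ p)
    (hmp : m ∈ augIdeal X ^ p) : m ∈ LinearMap.range (δK p) := by
  suffices ∀ q, 2 ≤ q → q ≤ p → m ∈ LinearMap.range (δK q) from this p hp le_rfl
  intro q hq
  induction q, hq using Nat.le_induction with
  | base => exact fun _ => hm2
  | succ q hq ih =>
    intro hqp
    obtain ⟨r, rfl⟩ := ih (by omega)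
    exact exists_lift_of_mem_pow_succ hexact hcomp hδA (hκ q hq) r
      (augIdeal_pow_le_pow X (by omega) hqp hmp)

end PVH

theorem pvh_criterion_quadraticity_general {X : Type*}
    (R : ℕ → Type*) [∀ p, AddCommGroup (R p)] [∀ p, Module ℚ (R p)]
    (Rdeg : ℕ → Type*) [∀ p, AddCommGroup (Rdeg p)] [∀ p, Module ℚ (Rdeg p)]
    (ι : ∀ p, R (p + 1) →ₗ[ℚ] R p)
    (π₁ : ∀ p, R p →ₗ[ℚ] Rdeg p)
    (δK : ∀ p, R p →ₗ[ℚ] FreeAlg X)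
    (hδ : ∀ p r, δK p r ∈ augIdeal X ^ p)
    (δA : ∀ p, Rdeg p →ₗ[ℚ] grF X p)
    -- exactness of the rows `0 → R_{≥p+1} → R_{≥p} → R_p → 0`
    (hexact : ∀ p, LinearMap.ker (π₁ p) = LinearMap.range (ι p))
    -- `δK` is compatible with the filtration maps
    (hcomp : ∀ p, (δK p).comp (ι p) = δK (p + 1))
    -- `δA` is the homogeneous truncation of `δK`
    (hδA : ∀ p (r : R p),
      δA p (π₁ p r) = Submodule.Quotient.mk ⟨δK p r, hδ p r⟩)
    -- `M` is the two-sided ideal of relations, generated in degrees ≥ 2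
    (M : Submodule ℚ (FreeAlg X))
    (hM : M = LinearMap.range (δK 2))
    -- the PVH criterion: all the maps `κ_p^Syz` are surjective
    (hκ : ∀ p, 2 ≤ p → ∀ y : Rdeg p, δA p y = 0 →
        ∃ r : R p, δK p r = 0 ∧ π₁ p r = y) :
    -- conclusion: `gr K` is quadratic
    ∀ p, 2 ≤ p →
      augIdeal X ^ (p + 1) ⊔ LinearMap.range (δK p) =
        augIdeal X ^ (p + 1) ⊔ (M ⊓ augIdeal X ^ p) := by
  intro p hp
  refine le_antisymm (sup_le_sup_left ?_ _) (sup_le_sup_left ?_ _)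
  · rintro _ ⟨r, rfl⟩
    exact ⟨hM ▸ range_antitone_of_comp_eq hcomp hp ⟨r, rfl⟩, hδ p r⟩
  · rintro m ⟨hmM, hmp⟩
    exact mem_range_of_mem_range_two_of_mem_pow hexact hcomp hδA hκ (hM ▸ hmM) hp hmp

/-- (PVH Criterion.)  In the PVH setup — `K = F/M` with `F` the free algebra on
`X`, `M ⊆ I_F²` the two-sided ideal of relations, `R p` the filtration piece
`R_{≥p}` of the free bimodule of relation symbols with graded piece `Rdeg p`,
`δK` the evaluation map and `δA` its homogeneous truncation — if the induced maps
`κ_p^Syz : ker (δK|R_{≥p}) → ker (δA|R_p)` are surjective for all `p ≥ 2`, then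
`gr K` is quadratic: the canonical graded surjection `A → gr K` from the quadratic
approximation is an isomorphism.  Concretely, in each degree `p`,
`A^p = I_F^p/(I_F^{p+1} + δK(R_{≥p}))` maps isomorphically onto
`I_K^p/I_K^{p+1} = I_F^p/(I_F^{p+1} + (M ∩ I_F^p))`, i.e. the two denominators
agree. -/
theorem pvh_criterion_quadraticity {X : Type*}
    (R : ℕ → Type*) [∀ p, AddCommGroup (R p)] [∀ p, Module ℚ (R p)]
    (Rdeg : ℕ → Type*) [∀ p, AddCommGroup (Rdeg p)] [∀ p, Module ℚ (Rdeg p)]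
    (ι : ∀ p, R (p + 1) →ₗ[ℚ] R p)
    (π₁ : ∀ p, R p →ₗ[ℚ] Rdeg p)
    (δK : ∀ p, R p →ₗ[ℚ] FreeAlg X)
    (hδ : ∀ p r, δK p r ∈ augIdeal X ^ p)
    (δA : ∀ p, Rdeg p →ₗ[ℚ] grF X p)
    -- exactness of the rows `0 → R_{≥p+1} → R_{≥p} → R_p → 0`
    (hι : ∀ p, Function.Injective (ι p))
    (hπ₁ : ∀ p, Function.Surjective (π₁ p))
    (hexact : ∀ p, LinearMap.ker (π₁ p) = LinearMap.range (ι p))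
    -- `δK` is compatible with the filtration maps
    (hcomp : ∀ p, (δK p).comp (ι p) = δK (p + 1))
    -- `δA` is the homogeneous truncation of `δK`
    (hδA : ∀ p (r : R p),
      δA p (π₁ p r) = Submodule.Quotient.mk ⟨δK p r, hδ p r⟩)
    -- `M` is the two-sided ideal of relations, generated in degrees ≥ 2
    (M : Submodule ℚ (FreeAlg X))
    (hM : M = LinearMap.range (δK 2))
    (hM2 : M ≤ augIdeal X * augIdeal X)
    (hMideal : ∀ f g : FreeAlg X, ∀ m ∈ M, f * m * g ∈ M)
    -- the PVH criterion: all the maps `κ_p^Syz` are surjective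
    (hκ : ∀ p, 2 ≤ p → ∀ y : Rdeg p, δA p y = 0 →
        ∃ r : R p, δK p r = 0 ∧ π₁ p r = y) :
    -- conclusion: `gr K` is quadratic
    ∀ p, 2 ≤ p →
      augIdeal X ^ (p + 1) ⊔ LinearMap.range (δK p) =
        augIdeal X ^ (p + 1) ⊔ (M ⊓ augIdeal X ^ p) :=
  pvh_criterion_quadraticity_general R Rdeg ι π₁ δK hδ δA hexact hcomp hδA M hM hκ
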